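/- arXiv:2301.11592 — 7 statements merged into one kernel-verified Lean document; each statement's English description precedes it below -/
import Mathlib

section
/- Let T be a finite set, R : T → ℝ a reward function, D : T → ℝ a nonnegative cost function, c_max > 0, λ > 0, and let Π be a nonempty finite set of probability mass functions on T. Define for P ∈ Π the penalized objective J_λ(P) = ∑_τ P(τ)R(τ) − λ·∑_{τ : D(τ) > c_max} P(τ)D(τ). Let Ψ* = max_{P ∈ Π} ∑_τ P(τ)R(τ), and let Ψ̄ = max over P ∈ Π with P supported on {τ : D(τ) ≤ c_max} of ∑_τ P(τ)R(τ) (assume such P exist). Then any maximizer P* of J_λ over Π satisfies ∑_{τ : D(τ) > c_max} P*(τ)D(τ) ≤ (Ψ* − Ψ̄)/λ. -/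
open Finset Filter

theorem stmt1 {T : Type*} [Fintype T]
    (R D : T → ℝ) (hD : ∀ τ, 0 ≤ D τ) (c : ℝ) (hc : 0 < c) (l : ℝ) (hl : 0 < l)
    (Pol : Finset (T → ℝ)) (hne : Pol.Nonempty)
    (hpmf : ∀ P ∈ Pol, (∀ τ, 0 ≤ P τ) ∧ ∑ τ, P τ = 1)
    (Ψs Ψb : ℝ)
    (hΨs : IsGreatest {x : ℝ | ∃ P ∈ Pol, x = ∑ τ, P τ * R τ} Ψs)
    (hΨb : IsGreatest {x : ℝ | ∃ P ∈ Pol, (∀ τ, c < D τ → P τ = 0) ∧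
      x = ∑ τ, P τ * R τ} Ψb)
    (Pstar : T → ℝ) (hmem : Pstar ∈ Pol)
    (hopt : ∀ Q ∈ Pol,
      (∑ τ, Q τ * R τ) - l * ∑ τ ∈ Finset.univ.filter (fun τ => c < D τ), Q τ * D τ ≤
      (∑ τ, Pstar τ * R τ) - l * ∑ τ ∈ Finset.univ.filter (fun τ => c < D τ), Pstar τ * D τ) :
    ∑ τ ∈ Finset.univ.filter (fun τ => c < D τ), Pstar τ * D τ ≤ (Ψs - Ψb) / l := by
  obtain ⟨⟨Q, hQ, hQ0, rfl⟩, hub⟩ := hΨb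
  have hQpen : ∑ τ ∈ Finset.univ.filter (fun τ => c < D τ), Q τ * D τ = 0 := by
    apply Finset.sum_eq_zero
    intro τ hτ
    rw [hQ0 τ (Finset.mem_filter.mp hτ).2, zero_mul]
  have h1 := hopt Q hQ
  rw [hQpen, mul_zero, sub_zero] at h1
  have h2 : ∑ τ, Pstar τ * R τ ≤ Ψs := hΨs.2 ⟨Pstar, hmem, rfl⟩
  rw [le_div_iff₀ hl, mul_comm]
  linarith
end

section
/- In the setting of the previous abstraction (finite trajectory set T, rewards R, nonnegative costs D, threshold c_max, policy class Π containing at least one P supported on {τ : D(τ) ≤ c_max}), define φ* = c_max − max_{P ∈ Π} ∑_{τ : D(τ) ≤ c_max} P(τ)D(τ), and assume φ* > 0. If λ ≥ (Ψ* − Ψ̄)/φ*, then any maximizer P* of the penalized objective J_λ(P) = ∑_τ P(τ)R(τ) − λ∑_{τ : D(τ) > c_max} P(τ)D(τ) satisfies the expected-cost constraint ∑_τ P*(τ)D(τ) ≤ c_max. -/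
open Finset Filter

theorem stmt2 {T : Type*} [Fintype T]
    (R D : T → ℝ) (hD : ∀ τ, 0 ≤ D τ) (c : ℝ) (hc : 0 < c) (l : ℝ) (hl : 0 < l)
    (Pol : Finset (T → ℝ)) (hne : Pol.Nonempty)
    (hpmf : ∀ P ∈ Pol, (∀ τ, 0 ≤ P τ) ∧ ∑ τ, P τ = 1)
    (Ψs Ψb φs : ℝ)
    (hΨs : IsGreatest {x : ℝ | ∃ P ∈ Pol, x = ∑ τ, P τ * R τ} Ψs)
    (hΨb : IsGreatest {x : ℝ | ∃ P ∈ Pol, (∀ τ, c < D τ → P τ = 0) ∧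
      x = ∑ τ, P τ * R τ} Ψb)
    (hφ : IsGreatest {x : ℝ | ∃ P ∈ Pol, x = ∑ τ ∈ Finset.univ.filter (fun τ => D τ ≤ c), P τ * D τ} (c - φs))
    (hφpos : 0 < φs)
    (hlamLB : (Ψs - Ψb) / φs ≤ l)
    (Pstar : T → ℝ) (hmem : Pstar ∈ Pol)
    (hopt : ∀ Q ∈ Pol,
      (∑ τ, Q τ * R τ) - l * ∑ τ ∈ Finset.univ.filter (fun τ => c < D τ), Q τ * D τ ≤
      (∑ τ, Pstar τ * R τ) - l * ∑ τ ∈ Finset.univ.filter (fun τ => c < D τ), Pstar τ * D τ) :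
    ∑ τ, Pstar τ * D τ ≤ c := by
  set V := ∑ τ ∈ Finset.univ.filter (fun τ => c < D τ), Pstar τ * D τ with hV
  have h1 : ∑ τ ∈ Finset.univ.filter (fun τ => D τ ≤ c), Pstar τ * D τ ≤ c - φs :=
    hφ.2 ⟨Pstar, hmem, rfl⟩
  obtain ⟨Q, hQmem, hQzero, hQeq⟩ := hΨb.1
  have hQV : ∑ τ ∈ Finset.univ.filter (fun τ => c < D τ), Q τ * D τ = 0 := by
    apply Finset.sum_eq_zero
    intro τ hτ
    simp only [Finset.mem_filter] at hτ
    rw [hQzero τ hτ.2, zero_mul]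
  have hopt' := hopt Q hQmem
  rw [hQV, ← hQeq] at hopt'
  have hRub : ∑ τ, Pstar τ * R τ ≤ Ψs := hΨs.2 ⟨Pstar, hmem, rfl⟩
  have hlV : l * V ≤ Ψs - Ψb := by linarith
  have hdiff : Ψs - Ψb ≤ l * φs := by
    rw [div_le_iff₀ hφpos] at hlamLB
    linarith [hlamLB]
  have hVφ : V ≤ φs := le_of_mul_le_mul_left (by linarith) hl
  have hsplit : ∑ τ, Pstar τ * D τ =
      (∑ τ ∈ Finset.univ.filter (fun τ => D τ ≤ c), Pstar τ * D τ) + V := by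
    rw [hV, ← Finset.sum_filter_add_sum_filter_not Finset.univ (fun τ => D τ ≤ c)]
    congr 1
    apply Finset.sum_congr _ (fun _ _ => rfl)
    ext τ; simp [not_le]
  linarith
end

section
/- In the setting of the VaR-penalized objective G_λ(P) = ∑_τ P(τ)R(τ) − λ·Tmax·P({τ : D(τ) > c_max}) over a nonempty finite class Π of pmfs on a finite set T containing some P̂ supported on {τ : D(τ) ≤ c_max}, any maximizer P* of G_λ satisfies P*({τ : D(τ) > c_max}) ≤ (Ψ* − Ψ̄)/(λ·Tmax), where Ψ* = max_{P∈Π} ∑ P(τ)R(τ) and Ψ̄ = ∑ P̂(τ)R(τ) for the best such P̂. Consequently the violation probability of optimal penalized policies tends to 0 as λ → ∞. -/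
open Finset Filter

theorem stmt6 {T : Type*} [Fintype T]
    (R D : T → ℝ) (hD : ∀ τ, 0 ≤ D τ) (c : ℝ) (hc : 0 < c)
    (Tmax : ℝ) (hT : 0 < Tmax)
    (Pol : Finset (T → ℝ)) (hne : Pol.Nonempty)
    (hpmf : ∀ P ∈ Pol, (∀ τ, 0 ≤ P τ) ∧ ∑ τ, P τ = 1)
    (Ψs Ψb : ℝ)
    (hΨs : IsGreatest {x : ℝ | ∃ P ∈ Pol, x = ∑ τ, P τ * R τ} Ψs)
    (hΨb : IsGreatest {x : ℝ | ∃ P ∈ Pol, (∀ τ, c < D τ → P τ = 0) ∧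
      x = ∑ τ, P τ * R τ} Ψb)
    (Pfam : ℝ → T → ℝ)
    (hfam : ∀ l, 0 < l → Pfam l ∈ Pol ∧ ∀ Q ∈ Pol,
      (∑ τ, Q τ * R τ) - l * Tmax * ∑ τ ∈ Finset.univ.filter (fun τ => c < D τ), Q τ ≤
      (∑ τ, (Pfam l) τ * R τ) - l * Tmax * ∑ τ ∈ Finset.univ.filter (fun τ => c < D τ), (Pfam l) τ) :
    (∀ l, 0 < l → ∑ τ ∈ Finset.univ.filter (fun τ => c < D τ), (Pfam l) τ ≤ (Ψs - Ψb) / (l * Tmax)) ∧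
    Tendsto (fun l => ∑ τ ∈ Finset.univ.filter (fun τ => c < D τ), (Pfam l) τ) atTop (nhds 0) := by
  obtain ⟨Pb, hPbPol, hPbsupp, hPbval⟩ := hΨb.1
  have key : ∀ l, 0 < l → ∑ τ ∈ Finset.univ.filter (fun τ => c < D τ), (Pfam l) τ ≤ (Ψs - Ψb) / (l * Tmax) := by
    intro l hl
    obtain ⟨hmem, hopt⟩ := hfam l hl
    have h1 := hopt Pb hPbPol
    have hPbzero : ∑ τ ∈ Finset.univ.filter (fun τ => c < D τ), Pb τ = 0 := by
      apply Finset.sum_eq_zero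
      intro τ hτ
      exact hPbsupp τ (Finset.mem_filter.mp hτ).2
    rw [hPbzero, mul_zero, sub_zero, ← hPbval] at h1
    have hΨle : ∑ τ, (Pfam l) τ * R τ ≤ Ψs := hΨs.2 ⟨Pfam l, hmem, rfl⟩
    have hlT : 0 < l * Tmax := mul_pos hl hT
    rw [le_div_iff₀ hlT, mul_comm]
    linarith
  refine ⟨key, ?_⟩
  have hnn : ∀ l, 0 < l → 0 ≤ ∑ τ ∈ Finset.univ.filter (fun τ => c < D τ), (Pfam l) τ := by
    intro l hl
    exact Finset.sum_nonneg fun τ _ => ((hpmf _ (hfam l hl).1).1 τ)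
  have hub : Tendsto (fun l : ℝ => (Ψs - Ψb) / (l * Tmax)) atTop (nhds 0) :=
    Tendsto.div_atTop tendsto_const_nhds (tendsto_id.atTop_mul_const hT)
  refine tendsto_of_tendsto_of_tendsto_of_le_of_le' tendsto_const_nhds hub ?_ ?_
  · filter_upwards [eventually_gt_atTop 0] with l hl using hnn l hl
  · filter_upwards [eventually_gt_atTop 0] with l hl using key l hl
end

section
/- Let T be a finite set, D₁,...,D_K : T → ℝ nonnegative, c^k_max > 0, R : T → ℝ, and Π a nonempty finite set of pmfs containing a worst-case-feasible Q₀ (supported on ∩_k {D_k ≤ c^k_max}). Given risk levels α_k ∈ (0,1), if λ_k ≥ (Ψ* − Ψ̄)/(α_k·c^k_max) for each k, then any maximizer P* of J(P) = ∑ P(τ)R(τ) − ∑_k λ_k ∑_{τ : D_k(τ) > c^k_max} P(τ)D_k(τ) satisfies P*({τ : D_k(τ) > c^k_max}) ≤ α_k for every k. -/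
/-!
Comparing the maximizer `P*` with the feasible `Q₀`, whose penalties all vanish, shows that the
weighted penalty `λ_k ∑_{D_k > c_k} P* D_k` is at most the reward gain `Ψ* - Ψ̄`. On the violation
set `D_k > c_k` the penalty dominates `c_k` times the violation probability (a Markov-type bound),
so `λ_k c_k P*(D_k > c_k) ≤ Ψ* - Ψ̄ ≤ λ_k α_k c_k`.
-/

open Finset Filter

section Penalty

variable {T : Type*} [Fintype T]

noncomputable def penalty (D : T → ℝ) (c : ℝ) (P : T → ℝ) : ℝ :=
  ∑ τ ∈ univ.filter (fun τ => c < D τ), P τ * D τ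

variable {D : T → ℝ} {c : ℝ} {P : T → ℝ}

lemma penalty_nonneg (hD : ∀ τ, 0 ≤ D τ) (hP : ∀ τ, 0 ≤ P τ) : 0 ≤ penalty D c P :=
  sum_nonneg fun τ _ => mul_nonneg (hP τ) (hD τ)

lemma penalty_eq_zero_of_feasible (hP : ∀ τ, c < D τ → P τ = 0) : penalty D c P = 0 :=
  sum_eq_zero fun τ hτ => by rw [hP τ (mem_filter.mp hτ).2, zero_mul]

lemma mul_sum_filter_le_penalty (hP : ∀ τ, 0 ≤ P τ) :
    c * ∑ τ ∈ univ.filter (fun τ => c < D τ), P τ ≤ penalty D c P := by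
  rw [mul_sum]
  refine sum_le_sum fun τ hτ => ?_
  rw [mul_comm]
  exact mul_le_mul_of_nonneg_left (mem_filter.mp hτ).2.le (hP τ)

lemma mul_penalty_le_of_objective_le {ι : Type*} [Fintype ι] (R : T → ℝ) (D : ι → T → ℝ)
    (hD : ∀ j τ, 0 ≤ D j τ) (c lam : ι → ℝ) (hlam : ∀ j, 0 ≤ lam j) {P Q : T → ℝ}
    (hP : ∀ τ, 0 ≤ P τ) (hQ : ∀ j τ, c j < D j τ → Q τ = 0)
    (hopt : ∑ τ, Q τ * R τ - ∑ j, lam j * penalty (D j) (c j) Q ≤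
      ∑ τ, P τ * R τ - ∑ j, lam j * penalty (D j) (c j) P) (k : ι) :
    lam k * penalty (D k) (c k) P ≤ ∑ τ, P τ * R τ - ∑ τ, Q τ * R τ := by
  have hQpen : ∑ j, lam j * penalty (D j) (c j) Q = 0 :=
    sum_eq_zero fun j _ => by rw [penalty_eq_zero_of_feasible (hQ j), mul_zero]
  have hsingle : lam k * penalty (D k) (c k) P ≤ ∑ j, lam j * penalty (D j) (c j) P :=
    single_le_sum (f := fun j => lam j * penalty (D j) (c j) P)
      (fun j _ => mul_nonneg (hlam j) (penalty_nonneg (hD j) hP)) (mem_univ k)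
  linarith

end Penalty

lemma le_of_mul_mul_le_of_div_le {lam c α p B : ℝ} (hlam : 0 < lam) (hc : 0 < c) (hα : 0 < α)
    (h : lam * (c * p) ≤ B) (hB : B / (α * c) ≤ lam) : p ≤ α := by
  rw [div_le_iff₀ (mul_pos hα hc)] at hB
  have : lam * c * p ≤ lam * c * α := by linarith
  exact le_of_mul_le_mul_left this (mul_pos hlam hc)

theorem stmt15_general {T : Type*} [Fintype T] {K : ℕ}
    (R : T → ℝ) (D : Fin K → T → ℝ) (hD : ∀ k τ, 0 ≤ D k τ)
    (cmax : Fin K → ℝ) (hc : ∀ k, 0 < cmax k)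
    (α : Fin K → ℝ) (hα0 : ∀ k, 0 < α k)
    (lam : Fin K → ℝ) (hlam : ∀ k, 0 < lam k)
    (Pol : Finset (T → ℝ))
    (hpmf : ∀ P ∈ Pol, (∀ τ, 0 ≤ P τ) ∧ ∑ τ, P τ = 1)
    (Q₀ : T → ℝ) (hQ₀ : Q₀ ∈ Pol)
    (hQ₀supp : ∀ τ, (∃ k, cmax k < D k τ) → Q₀ τ = 0)
    (Ψs : ℝ) (hΨs : IsGreatest {x : ℝ | ∃ P ∈ Pol, x = ∑ τ, P τ * R τ} Ψs)
    (Ψb : ℝ) (hΨb : Ψb = ∑ τ, Q₀ τ * R τ)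
    (hlamLB : ∀ k, (Ψs - Ψb) / (α k * cmax k) ≤ lam k)
    (Pstar : T → ℝ) (hmem : Pstar ∈ Pol)
    (hopt : ∀ Q ∈ Pol,
      (∑ τ, Q τ * R τ) - ∑ k, lam k * ∑ τ ∈ Finset.univ.filter (fun τ => cmax k < D k τ), Q τ * D k τ ≤
      (∑ τ, Pstar τ * R τ) - ∑ k, lam k * ∑ τ ∈ Finset.univ.filter (fun τ => cmax k < D k τ), Pstar τ * D k τ) :
    ∀ k, ∑ τ ∈ Finset.univ.filter (fun τ => cmax k < D k τ), Pstar τ ≤ α k := by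
  intro k
  have hPstar : ∀ τ, 0 ≤ Pstar τ := (hpmf Pstar hmem).1
  have hgain : ∑ τ, Pstar τ * R τ ≤ Ψs := hΨs.2 ⟨Pstar, hmem, rfl⟩
  have hpen : lam k * penalty (D k) (cmax k) Pstar ≤ Ψs - Ψb := by
    have := mul_penalty_le_of_objective_le R D hD cmax lam (fun j => (hlam j).le) hPstar
      (fun j τ h => hQ₀supp τ ⟨j, h⟩) (hopt Q₀ hQ₀) k
    linarith
  refine le_of_mul_mul_le_of_div_le (hlam k) (hc k) (hα0 k) ?_ (hlamLB k)
  exact (mul_le_mul_of_nonneg_left (mul_sum_filter_le_penalty hPstar) (hlam k).le).trans hpen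

theorem stmt15 {T : Type*} [Fintype T] {K : ℕ}
    (R : T → ℝ) (D : Fin K → T → ℝ) (hD : ∀ k τ, 0 ≤ D k τ)
    (cmax : Fin K → ℝ) (hc : ∀ k, 0 < cmax k)
    (α : Fin K → ℝ) (hα0 : ∀ k, 0 < α k) (hα1 : ∀ k, α k < 1)
    (lam : Fin K → ℝ) (hlam : ∀ k, 0 < lam k)
    (Pol : Finset (T → ℝ)) (hne : Pol.Nonempty)
    (hpmf : ∀ P ∈ Pol, (∀ τ, 0 ≤ P τ) ∧ ∑ τ, P τ = 1)
    (Q₀ : T → ℝ) (hQ₀ : Q₀ ∈ Pol)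
    (hQ₀supp : ∀ τ, (∃ k, cmax k < D k τ) → Q₀ τ = 0)
    (Ψs : ℝ) (hΨs : IsGreatest {x : ℝ | ∃ P ∈ Pol, x = ∑ τ, P τ * R τ} Ψs)
    (Ψb : ℝ) (hΨb : Ψb = ∑ τ, Q₀ τ * R τ)
    (hlamLB : ∀ k, (Ψs - Ψb) / (α k * cmax k) ≤ lam k)
    (Pstar : T → ℝ) (hmem : Pstar ∈ Pol)
    (hopt : ∀ Q ∈ Pol,
      (∑ τ, Q τ * R τ) - ∑ k, lam k * ∑ τ ∈ Finset.univ.filter (fun τ => cmax k < D k τ), Q τ * D k τ ≤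
      (∑ τ, Pstar τ * R τ) - ∑ k, lam k * ∑ τ ∈ Finset.univ.filter (fun τ => cmax k < D k τ), Pstar τ * D k τ) :
    ∀ k, ∑ τ ∈ Finset.univ.filter (fun τ => cmax k < D k τ), Pstar τ ≤ α k :=
  stmt15_general R D hD cmax hc α hα0 lam hlam Pol hpmf Q₀ hQ₀ hQ₀supp Ψs hΨs Ψb hΨb hlamLB Pstar
    hmem hopt
end

section
/- Let S be a finite set, d : S → ℝ nonnegative, c_max > 0, γ ∈ (0,1], λ > 0 and τ = (s₀,...,s_T) with prefix costs c_t = ∑_{i<t} d(s_i). Define the penalized reward r̃_t = r(s_t) if c_{t+1} ≤ c_max; r̃_t = r(s_t) − λ·c_{t+1}/γ^t if c_t ≤ c_max < c_{t+1}; and r̃_t = r(s_t) − λ·d(s_t)/γ^t if c_t > c_max. Then ∑_{t=0}^{T} γ^t·r̃_t = ∑_{t=0}^{T} γ^t·r(s_t) − λ·D(τ)·1{D(τ) > c_max}, where D(τ) = c_{T+1}. -/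
open Finset Filter

theorem stmt17 {S : Type*} [Fintype S]
    (d : S → ℝ) (hd : ∀ s, 0 ≤ d s) (r : S → ℝ)
    (cmax : ℝ) (hc : 0 < cmax)
    (γ : ℝ) (hγ0 : 0 < γ) (hγ1 : γ ≤ 1)
    (l : ℝ) (hl : 0 < l)
    (TH : ℕ) (s : ℕ → S)
    (c : ℕ → ℝ) (hcdef : ∀ t, c t = ∑ i ∈ Finset.range t, d (s i))
    (rt : ℕ → ℝ)
    (hrt : ∀ t, rt t =
      if c (t + 1) ≤ cmax then r (s t)
      else if c t ≤ cmax then r (s t) - l * c (t + 1) / γ ^ t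
      else r (s t) - l * d (s t) / γ ^ t) :
    ∑ t ∈ Finset.range (TH + 1), γ ^ t * rt t =
      (∑ t ∈ Finset.range (TH + 1), γ ^ t * r (s t)) -
        l * (if cmax < c (TH + 1) then c (TH + 1) else 0) := by
  have hstep : ∀ t, c (t + 1) = c t + d (s t) := by
    intro t
    rw [hcdef, hcdef, Finset.sum_range_succ]
  have hpow : ∀ t : ℕ, (γ : ℝ) ^ t ≠ 0 := fun t => pow_ne_zero t (ne_of_gt hγ0)
  induction TH with
  | zero =>
      have hc0 : c 0 = 0 := by simp [hcdef]
      simp only [zero_add, Finset.sum_range_one, hrt 0]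
      by_cases h1 : c 1 ≤ cmax
      · rw [if_pos h1, if_neg (not_lt.mpr h1)]
        ring
      · rw [if_neg h1, if_pos (by rw [hc0]; exact le_of_lt hc),
          if_pos (lt_of_not_ge h1)]
        field_simp
  | succ T ih =>
      rw [Finset.sum_range_succ, ih, Finset.sum_range_succ (fun t => γ ^ t * r (s t)),
        hrt (T + 1)]
      have hmono : c (T + 1) ≤ c (T + 2) := by
        rw [hstep (T + 1)]; linarith [hd (s (T + 1))]
      by_cases h2 : c (T + 2) ≤ cmax
      · have h1 : c (T + 1) ≤ cmax := le_trans hmono h2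
        rw [if_pos h2, if_neg (not_lt.mpr h2), if_neg (not_lt.mpr h1)]
        simp only [Finset.sum_range_succ]
        ring
      · rw [if_neg h2, if_pos (lt_of_not_ge h2)]
        by_cases h1 : c (T + 1) ≤ cmax
        · rw [if_pos h1, if_neg (not_lt.mpr h1)]
          simp only [Finset.sum_range_succ]
          field_simp
          ring
        · rw [if_neg h1, if_pos (lt_of_not_ge h1), hstep (T + 1)]
          simp only [Finset.sum_range_succ]
          field_simp
          ring
end

section
/- Let S be a finite set, d : S → ℝ nonnegative, c_max > 0, γ ∈ (0,1], λ > 0 and τ = (s₀,...,s_T) with prefix costs c_t = ∑_{i<t} d(s_i). Define the CVaR-penalized reward r̃_t = r(s_t) if c_{t+1} ≤ c_max; r̃_t = r(s_t) − λ·(c_{t+1} − c_max)/γ^t if c_t ≤ c_max < c_{t+1}; and r̃_t = r(s_t) − λ·d(s_t)/γ^t if c_t > c_max. Then ∑_{t=0}^{T} γ^t·r̃_t = ∑_{t=0}^{T} γ^t·r(s_t) − λ·max(D(τ) − c_max, 0), where D(τ) = c_{T+1}. -/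
open Finset Filter

theorem stmt18 {S : Type*} [Fintype S]
    (d : S → ℝ) (hd : ∀ s, 0 ≤ d s) (r : S → ℝ)
    (cmax : ℝ) (hc : 0 < cmax)
    (γ : ℝ) (hγ0 : 0 < γ) (hγ1 : γ ≤ 1)
    (l : ℝ) (hl : 0 < l)
    (TH : ℕ) (s : ℕ → S)
    (c : ℕ → ℝ) (hcdef : ∀ t, c t = ∑ i ∈ Finset.range t, d (s i))
    (rt : ℕ → ℝ)
    (hrt : ∀ t, rt t =
      if c (t + 1) ≤ cmax then r (s t)
      else if c t ≤ cmax then r (s t) - l * (c (t + 1) - cmax) / γ ^ t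
      else r (s t) - l * d (s t) / γ ^ t) :
    ∑ t ∈ Finset.range (TH + 1), γ ^ t * rt t =
      (∑ t ∈ Finset.range (TH + 1), γ ^ t * r (s t)) -
        l * max (c (TH + 1) - cmax) 0 := by
  have hγne : ∀ t : ℕ, (γ : ℝ) ^ t ≠ 0 := fun t => pow_ne_zero t (ne_of_gt hγ0)
  have hstep : ∀ t, c (t + 1) = c t + d (s t) := by
    intro t
    rw [hcdef, hcdef, Finset.sum_range_succ]
  have key : ∀ t, γ ^ t * rt t =
      γ ^ t * r (s t) -
        (l * max (c (t + 1) - cmax) 0 - l * max (c t - cmax) 0) := by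
    intro t
    rw [hrt t]
    by_cases h1 : c (t + 1) ≤ cmax
    · have h2 : c t ≤ cmax := by
        have := hstep t
        nlinarith [hd (s t)]
      rw [if_pos h1, max_eq_right (by linarith), max_eq_right (by linarith)]
      ring
    · rw [if_neg h1]
      push_neg at h1
      by_cases h2 : c t ≤ cmax
      · rw [if_pos h2, max_eq_left (by linarith), max_eq_right (by linarith)]
        field_simp
        ring
      · push_neg at h2
        have h3 := hstep t
        rw [if_neg (not_le.mpr h2), max_eq_left (by linarith),
          max_eq_left (by linarith)]
        rw [h3]
        field_simp
        ring
  calc ∑ t ∈ Finset.range (TH + 1), γ ^ t * rt t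
      = ∑ t ∈ Finset.range (TH + 1), (γ ^ t * r (s t) -
          (l * max (c (t + 1) - cmax) 0 - l * max (c t - cmax) 0)) := by
        exact Finset.sum_congr rfl fun t _ => key t
    _ = (∑ t ∈ Finset.range (TH + 1), γ ^ t * r (s t)) -
          (l * max (c (TH + 1) - cmax) 0 - l * max (c 0 - cmax) 0) := by
        rw [Finset.sum_sub_distrib, Finset.sum_range_sub
          (fun t => l * max (c t - cmax) 0)]
    _ = _ := by
        have hc0 : c 0 = 0 := by simp [hcdef]
        rw [hc0, show max (0 - cmax : ℝ) 0 = 0 from max_eq_right (by linarith)]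
        ring
end

section
/- Let S be a finite set, d : S → ℝ nonnegative, c_max > 0, γ ∈ (0,1], λ > 0, T ≥ 0, and τ = (s₀,...,s_T) with prefix costs c_t = ∑_{i<t} d(s_i). Define the VaR-penalized reward r̃_t = r(s_t) if c_{t+1} ≤ c_max; r̃_t = r(s_t) − λ·(t+1)/γ^t if c_t ≤ c_max < c_{t+1}; and r̃_t = r(s_t) − λ/γ^t if c_t > c_max. Then ∑_{t=0}^{T} γ^t·r̃_t = ∑_{t=0}^{T} γ^t·r(s_t) − λ·(T+1)·1{D(τ) > c_max}, where D(τ) = c_{T+1}. -/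
open Finset Filter

theorem stmt19 {S : Type*} [Fintype S]
    (d : S → ℝ) (hd : ∀ s, 0 ≤ d s) (r : S → ℝ)
    (cmax : ℝ) (hc : 0 < cmax)
    (γ : ℝ) (hγ0 : 0 < γ) (hγ1 : γ ≤ 1)
    (l : ℝ) (hl : 0 < l)
    (TH : ℕ) (s : ℕ → S)
    (c : ℕ → ℝ) (hcdef : ∀ t, c t = ∑ i ∈ Finset.range t, d (s i))
    (rt : ℕ → ℝ)
    (hrt : ∀ t, rt t =
      if c (t + 1) ≤ cmax then r (s t)
      else if c t ≤ cmax then r (s t) - l * ((t : ℝ) + 1) / γ ^ t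
      else r (s t) - l / γ ^ t) :
    ∑ t ∈ Finset.range (TH + 1), γ ^ t * rt t =
      (∑ t ∈ Finset.range (TH + 1), γ ^ t * r (s t)) -
        l * ((TH : ℝ) + 1) * (if cmax < c (TH + 1) then 1 else 0) := by
  have hmono : ∀ t, c t ≤ c (t + 1) := by
    intro t
    rw [hcdef, hcdef, Finset.sum_range_succ]
    exact le_add_of_nonneg_right (hd _)
  have hc0 : c 0 = 0 := by simp [hcdef]
  induction TH with
  | zero =>
    simp only [zero_add, Finset.sum_range_one, pow_zero, one_mul, Nat.cast_zero, hrt 0]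
    by_cases h1 : c 1 ≤ cmax
    · simp [h1, not_lt.mpr h1]
    · rw [if_neg h1, if_pos (by rw [hc0]; exact hc.le), if_pos (lt_of_not_ge h1)]
      norm_num
  | succ n ih =>
    rw [Finset.sum_range_succ, Finset.sum_range_succ (fun t => γ ^ t * r (s t)), ih, hrt (n + 1)]
    by_cases h2 : c (n + 2) ≤ cmax
    · have h1 : c (n + 1) ≤ cmax := le_trans (hmono (n + 1)) h2
      rw [show n + 1 + 1 = n + 2 from rfl, if_pos h2, if_neg (not_lt.mpr h1),
        if_neg (not_lt.mpr h2)]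
      ring
    · rw [show n + 1 + 1 = n + 2 from rfl, if_neg h2, if_pos (lt_of_not_ge h2)]
      have hγ : γ ^ (n + 1) ≠ 0 := pow_ne_zero _ hγ0.ne'
      by_cases h1 : c (n + 1) ≤ cmax
      · rw [if_pos h1, if_neg (not_lt.mpr h1)]
        push_cast
        field_simp
        ring
      · rw [if_neg h1, if_pos (lt_of_not_ge h1)]
        push_cast
        field_simp
        ring
end
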